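/- Let (G, Δ, ε, φ) be a quasi-bialgebra and (ρ, φ_ρ) a right coaction of G on an algebra M. If U ∈ M ⊗ G is invertible with (id ⊗ ε)(U) = 1_M, then ρ'(m) := U·ρ(m)·U⁻¹ is again a right G-coaction with reassociator φ'_ρ = (id_M ⊗ Δ)(U)·φ_ρ·(ρ ⊗ id_G)(U⁻¹)·(U⁻¹ ⊗ 1_G); i.e. (ρ', φ'_ρ) satisfies the same right-coaction axioms as (ρ, φ_ρ). -/

import Mathlib

open TensorProduct

noncomputable section

/-- A quasi-bialgebra structure (Drinfeld) on an algebra `G` over `ℂ`: algebra maps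
`Δ : G → G ⊗ G` and `ε : G → ℂ`, together with an invertible reassociator
`φ ∈ G ⊗ G ⊗ G` satisfying quasi-coassociativity, the pentagon identity and the counit
axioms. -/
structure QuasiBialg (G : Type*) [Ring G] [Algebra ℂ G] where
  comul : G →ₐ[ℂ] G ⊗[ℂ] G
  counit : G →ₐ[ℂ] ℂ
  assocEl : G ⊗[ℂ] (G ⊗[ℂ] G)
  assocElInv : G ⊗[ℂ] (G ⊗[ℂ] G)
  assocEl_mul_inv : assocEl * assocElInv = 1
  assocEl_inv_mul : assocElInv * assocEl = 1
  quasiCoassoc : ∀ a : G,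
    TensorProduct.map LinearMap.id comul.toLinearMap (comul a) * assocEl =
      assocEl *
        (TensorProduct.assoc ℂ G G G)
          (TensorProduct.map comul.toLinearMap LinearMap.id (comul a))
  counit_comul_left : ∀ a : G,
    (TensorProduct.lid ℂ G)
      (TensorProduct.map counit.toLinearMap LinearMap.id (comul a)) = a
  counit_comul_right : ∀ a : G,
    (TensorProduct.rid ℂ G)
      (TensorProduct.map LinearMap.id counit.toLinearMap (comul a)) = a
  counit_assocEl :
    TensorProduct.map LinearMap.id
        ((TensorProduct.lid ℂ G).toLinearMap ∘ₗ
          TensorProduct.map counit.toLinearMap LinearMap.id) assocEl =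
      (1 : G ⊗[ℂ] G)
  pentagon :
    TensorProduct.map LinearMap.id
          (TensorProduct.map LinearMap.id comul.toLinearMap) assocEl *
        (TensorProduct.assoc ℂ G G (G ⊗[ℂ] G))
          (TensorProduct.map comul.toLinearMap LinearMap.id assocEl) =
      ((1 : G) ⊗ₜ[ℂ] assocEl) *
        TensorProduct.map LinearMap.id (TensorProduct.assoc ℂ G G G).toLinearMap
          (TensorProduct.map LinearMap.id
            (TensorProduct.map comul.toLinearMap LinearMap.id) assocEl) *
        TensorProduct.map LinearMap.id (TensorProduct.assoc ℂ G G G).toLinearMap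
          ((TensorProduct.assoc ℂ G (G ⊗[ℂ] G) G) (assocEl ⊗ₜ[ℂ] (1 : G)))

/-- A quasi-Hopf algebra structure (Drinfeld) on an algebra `G` over `ℂ`: a quasi-bialgebra
together with an invertible algebra antimorphism `S` and elements `α, β ∈ G` satisfying the
antipode axioms. -/
structure QuasiHopf (G : Type*) [Ring G] [Algebra ℂ G] extends QuasiBialg G where
  S : G →ₗ[ℂ] G
  S_one : S 1 = 1
  S_mul : ∀ a b : G, S (a * b) = S b * S a
  Sinv : G →ₗ[ℂ] G
  Sinv_S : ∀ a : G, Sinv (S a) = a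
  S_Sinv : ∀ a : G, S (Sinv a) = a
  alphaEl : G
  betaEl : G
  antipode_left : ∀ a : G,
    LinearMap.mul' ℂ G
        (TensorProduct.map (LinearMap.mulRight ℂ alphaEl ∘ₗ S) LinearMap.id (comul a)) =
      counit a • alphaEl
  antipode_right : ∀ a : G,
    LinearMap.mul' ℂ G
        (TensorProduct.map (LinearMap.mulRight ℂ betaEl) S (comul a)) =
      counit a • betaEl
  antipode_assocEl :
    (LinearMap.mul' ℂ G ∘ₗ
        TensorProduct.map (LinearMap.mulRight ℂ betaEl)
          (LinearMap.mul' ℂ G ∘ₗ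
            TensorProduct.map (LinearMap.mulRight ℂ alphaEl ∘ₗ S) LinearMap.id))
      assocEl = 1
  antipode_assocElInv :
    (LinearMap.mul' ℂ G ∘ₗ
        TensorProduct.map (LinearMap.mulRight ℂ alphaEl ∘ₗ S)
          (LinearMap.mul' ℂ G ∘ₗ
            TensorProduct.map (LinearMap.mulRight ℂ betaEl) S))
      assocElInv = 1

/-- A right coaction `(ρ, φ_ρ)` of a quasi-bialgebra `Q` on an algebra `M`: an algebra map
`ρ : M → M ⊗ G` with invertible reassociator `φ_ρ ∈ M ⊗ G ⊗ G` satisfying the intertwining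
relation, the mixed pentagon identity and the counit axioms. -/
structure RightQCoaction (G M : Type*) [Ring G] [Algebra ℂ G] [Ring M] [Algebra ℂ M]
    (Q : QuasiBialg G) where
  rho : M →ₐ[ℂ] M ⊗[ℂ] G
  phiR : M ⊗[ℂ] (G ⊗[ℂ] G)
  phiRInv : M ⊗[ℂ] (G ⊗[ℂ] G)
  phiR_mul_inv : phiR * phiRInv = 1
  phiR_inv_mul : phiRInv * phiR = 1
  intertwine : ∀ m : M,
    phiR *
        (TensorProduct.assoc ℂ M G G)
          (TensorProduct.map rho.toLinearMap LinearMap.id (rho m)) =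
      TensorProduct.map LinearMap.id Q.comul.toLinearMap (rho m) * phiR
  pentagon :
    ((1 : M) ⊗ₜ[ℂ] Q.assocEl) *
        TensorProduct.map LinearMap.id (TensorProduct.assoc ℂ G G G).toLinearMap
          (TensorProduct.map LinearMap.id
            (TensorProduct.map Q.comul.toLinearMap LinearMap.id) phiR) *
        TensorProduct.map LinearMap.id (TensorProduct.assoc ℂ G G G).toLinearMap
          ((TensorProduct.assoc ℂ M (G ⊗[ℂ] G) G) (phiR ⊗ₜ[ℂ] (1 : G))) =
      TensorProduct.map LinearMap.id
          (TensorProduct.map LinearMap.id Q.comul.toLinearMap) phiR *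
        (TensorProduct.assoc ℂ M G (G ⊗[ℂ] G))
          (TensorProduct.map rho.toLinearMap LinearMap.id phiR)
  counit_rho : ∀ m : M,
    (TensorProduct.rid ℂ M)
      (TensorProduct.map LinearMap.id Q.counit.toLinearMap (rho m)) = m
  counit_phiR_mid :
    TensorProduct.map LinearMap.id
        ((TensorProduct.lid ℂ G).toLinearMap ∘ₗ
          TensorProduct.map Q.counit.toLinearMap LinearMap.id) phiR =
      (1 : M ⊗[ℂ] G)
  counit_phiR_right :
    TensorProduct.map LinearMap.id
        ((TensorProduct.rid ℂ G).toLinearMap ∘ₗ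
          TensorProduct.map LinearMap.id Q.counit.toLinearMap) phiR =
      (1 : M ⊗[ℂ] G)

/-- The twisted coaction `ρ'(m) = U ρ(m) U⁻¹`. -/
def twistRho {G M : Type*} [Ring G] [Algebra ℂ G] [Ring M] [Algebra ℂ M]
    (U Uinv : M ⊗[ℂ] G) (rho : M →ₗ[ℂ] M ⊗[ℂ] G) : M →ₗ[ℂ] M ⊗[ℂ] G :=
  LinearMap.mulRight ℂ Uinv ∘ₗ LinearMap.mulLeft ℂ U ∘ₗ rho

/-- The twisted reassociator
`φ'_ρ = (id ⊗ Δ)(U) · φ_ρ · (ρ ⊗ id)(U⁻¹) · (U⁻¹ ⊗ 1)`. -/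
def twistPhiR {G M : Type*} [Ring G] [Algebra ℂ G] [Ring M] [Algebra ℂ M]
    (Q : QuasiBialg G) (R : RightQCoaction G M Q) (U Uinv : M ⊗[ℂ] G) :
    M ⊗[ℂ] (G ⊗[ℂ] G) :=
  TensorProduct.map LinearMap.id Q.comul.toLinearMap U * R.phiR *
    (TensorProduct.assoc ℂ M G G)
      (TensorProduct.map R.rho.toLinearMap LinearMap.id Uinv) *
    (TensorProduct.assoc ℂ M G G) (Uinv ⊗ₜ[ℂ] (1 : G))


namespace Statement14Aux


set_option maxHeartbeats 1600000
set_option synthInstance.maxHeartbeats 1000000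
set_option maxRecDepth 8000

-- Locally restated algebra lemmas (instance paths match the ambient elaboration)
section Helpers
variable {G M : Type*} [Ring G] [Algebra ℂ G] [Ring M] [Algebra ℂ M]

lemma mul_assoc2 (a b c : M ⊗[ℂ] G) : a * b * c = a * (b * c) := mul_assoc a b c
lemma one_mul2 (a : M ⊗[ℂ] G) : (1 : M ⊗[ℂ] G) * a = a := one_mul a
lemma mul_one2 (a : M ⊗[ℂ] G) : a * (1 : M ⊗[ℂ] G) = a := mul_one a
lemma zero_mul2 (a : M ⊗[ℂ] G) : (0 : M ⊗[ℂ] G) * a = 0 := zero_mul a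
lemma mul_zero2 (a : M ⊗[ℂ] G) : a * (0 : M ⊗[ℂ] G) = 0 := mul_zero a
lemma add_mul2 (a b c : M ⊗[ℂ] G) : (a + b) * c = a * c + b * c := add_mul a b c
lemma mul_add2 (a b c : M ⊗[ℂ] G) : a * (b + c) = a * b + a * c := mul_add a b c
lemma smul_zero2 (c : ℂ) : c • (0 : M ⊗[ℂ] G) = 0 := smul_zero c
lemma smul_add2 (c : ℂ) (x y : M ⊗[ℂ] G) : c • (x + y) = c • x + c • y := smul_add c x y
lemma cancel2 {a b : M ⊗[ℂ] G} (h : a * b = 1) (c : M ⊗[ℂ] G) :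
    a * (b * c) = c := by rw [← mul_assoc2, h, one_mul2]

lemma mul_assoc3 (a b c : M ⊗[ℂ] (G ⊗[ℂ] G)) : a * b * c = a * (b * c) := mul_assoc a b c
lemma one_mul3 (a : M ⊗[ℂ] (G ⊗[ℂ] G)) : (1 : M ⊗[ℂ] (G ⊗[ℂ] G)) * a = a := one_mul a
lemma mul_one3 (a : M ⊗[ℂ] (G ⊗[ℂ] G)) : a * (1 : M ⊗[ℂ] (G ⊗[ℂ] G)) = a := mul_one a
lemma zero_mul3 (a : M ⊗[ℂ] (G ⊗[ℂ] G)) : (0 : M ⊗[ℂ] (G ⊗[ℂ] G)) * a = 0 := zero_mul a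
lemma mul_zero3 (a : M ⊗[ℂ] (G ⊗[ℂ] G)) : a * (0 : M ⊗[ℂ] (G ⊗[ℂ] G)) = 0 := mul_zero a
lemma add_mul3 (a b c : M ⊗[ℂ] (G ⊗[ℂ] G)) : (a + b) * c = a * c + b * c := add_mul a b c
lemma mul_add3 (a b c : M ⊗[ℂ] (G ⊗[ℂ] G)) : a * (b + c) = a * b + a * c := mul_add a b c
lemma cancel3 {a b : M ⊗[ℂ] (G ⊗[ℂ] G)} (h : a * b = 1) (c : M ⊗[ℂ] (G ⊗[ℂ] G)) :
    a * (b * c) = c := by rw [← mul_assoc3, h, one_mul3]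

lemma mul_assoc4 (a b c : M ⊗[ℂ] (G ⊗[ℂ] (G ⊗[ℂ] G))) : a * b * c = a * (b * c) :=
  mul_assoc a b c
lemma one_mul4 (a : M ⊗[ℂ] (G ⊗[ℂ] (G ⊗[ℂ] G))) :
    (1 : M ⊗[ℂ] (G ⊗[ℂ] (G ⊗[ℂ] G))) * a = a := one_mul a
lemma mul_one4 (a : M ⊗[ℂ] (G ⊗[ℂ] (G ⊗[ℂ] G))) :
    a * (1 : M ⊗[ℂ] (G ⊗[ℂ] (G ⊗[ℂ] G))) = a := mul_one a
lemma alg_one4 {A : Type*} [Ring A] [Algebra ℂ A]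
    (f : A →ₐ[ℂ] M ⊗[ℂ] (G ⊗[ℂ] (G ⊗[ℂ] G))) : f 1 = 1 := f.toRingHom.map_one
lemma zero_mul4 (a : M ⊗[ℂ] (G ⊗[ℂ] (G ⊗[ℂ] G))) :
    (0 : M ⊗[ℂ] (G ⊗[ℂ] (G ⊗[ℂ] G))) * a = 0 := zero_mul a
lemma mul_zero4 (a : M ⊗[ℂ] (G ⊗[ℂ] (G ⊗[ℂ] G))) :
    a * (0 : M ⊗[ℂ] (G ⊗[ℂ] (G ⊗[ℂ] G))) = 0 := mul_zero a
lemma add_mul4 (a b c : M ⊗[ℂ] (G ⊗[ℂ] (G ⊗[ℂ] G))) : (a + b) * c = a * c + b * c :=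
  NonUnitalNonAssocRing.right_distrib a b c
lemma mul_add4 (a b c : M ⊗[ℂ] (G ⊗[ℂ] (G ⊗[ℂ] G))) : a * (b + c) = a * b + a * c :=
  NonUnitalNonAssocRing.left_distrib a b c
lemma cancel4 {a b : M ⊗[ℂ] (G ⊗[ℂ] (G ⊗[ℂ] G))} (h : a * b = 1)
    (c : M ⊗[ℂ] (G ⊗[ℂ] (G ⊗[ℂ] G))) : a * (b * c) = c := by
  rw [← mul_assoc4, h, one_mul4]

end Helpers

section Aux

variable {G M : Type*} [Ring G] [Algebra ℂ G] [Ring M] [Algebra ℂ M]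

/-- `T = id ⊗ Δ : M ⊗ G → M ⊗ (G ⊗ G)` as an algebra map. -/
def Th (Q : QuasiBialg G) : M ⊗[ℂ] G →ₐ[ℂ] M ⊗[ℂ] (G ⊗[ℂ] G) :=
  Algebra.TensorProduct.map (AlgHom.id ℂ M) Q.comul

/-- `A = assoc ∘ (ρ ⊗ id)` as an algebra map. -/
def Ah {Q : QuasiBialg G} (R : RightQCoaction G M Q) :
    M ⊗[ℂ] G →ₐ[ℂ] M ⊗[ℂ] (G ⊗[ℂ] G) :=
  (Algebra.TensorProduct.assoc ℂ ℂ ℂ M G G).toAlgHom.comp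
    (Algebra.TensorProduct.map R.rho (AlgHom.id ℂ G))

/-- `ι(x) = assoc (x ⊗ 1)` as an algebra map. -/
def ih (G M : Type*) [Ring G] [Algebra ℂ G] [Ring M] [Algebra ℂ M] :
    M ⊗[ℂ] G →ₐ[ℂ] M ⊗[ℂ] (G ⊗[ℂ] G) :=
  (Algebra.TensorProduct.assoc ℂ ℂ ℂ M G G).toAlgHom.comp Algebra.TensorProduct.includeLeft

/-- `id ⊗ Δ ⊗ id` (with reassociation), legs 2 → 23. -/
def D2 (M : Type*) [Ring M] [Algebra ℂ M] (Q : QuasiBialg G) :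
    M ⊗[ℂ] (G ⊗[ℂ] G) →ₐ[ℂ] M ⊗[ℂ] (G ⊗[ℂ] (G ⊗[ℂ] G)) :=
  Algebra.TensorProduct.map (AlgHom.id ℂ M)
    ((Algebra.TensorProduct.assoc ℂ ℂ ℂ G G G).toAlgHom.comp
      (Algebra.TensorProduct.map Q.comul (AlgHom.id ℂ G)))

/-- `id ⊗ id ⊗ Δ`, legs 3 → 34. -/
def D3 (M : Type*) [Ring M] [Algebra ℂ M] (Q : QuasiBialg G) :
    M ⊗[ℂ] (G ⊗[ℂ] G) →ₐ[ℂ] M ⊗[ℂ] (G ⊗[ℂ] (G ⊗[ℂ] G)) :=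
  Algebra.TensorProduct.map (AlgHom.id ℂ M)
    (Algebra.TensorProduct.map (AlgHom.id ℂ G) Q.comul)

/-- `J(y) = y ⊗ 1` at leg 4 (with reassociation). -/
def Jh (G M : Type*) [Ring G] [Algebra ℂ G] [Ring M] [Algebra ℂ M] :
    M ⊗[ℂ] (G ⊗[ℂ] G) →ₐ[ℂ] M ⊗[ℂ] (G ⊗[ℂ] (G ⊗[ℂ] G)) :=
  ((Algebra.TensorProduct.map (AlgHom.id ℂ M)
      (Algebra.TensorProduct.assoc ℂ ℂ ℂ G G G).toAlgHom).comp
    (Algebra.TensorProduct.assoc ℂ ℂ ℂ M (G ⊗[ℂ] G) G).toAlgHom).comp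
      Algebra.TensorProduct.includeLeft

/-- `ρ ⊗ id ⊗ id`, leg 1 → 12 (with reassociation). -/
def Arh {Q : QuasiBialg G} (R : RightQCoaction G M Q) :
    M ⊗[ℂ] (G ⊗[ℂ] G) →ₐ[ℂ] M ⊗[ℂ] (G ⊗[ℂ] (G ⊗[ℂ] G)) :=
  (Algebra.TensorProduct.assoc ℂ ℂ ℂ M G (G ⊗[ℂ] G)).toAlgHom.comp
    (Algebra.TensorProduct.map R.rho (AlgHom.id ℂ (G ⊗[ℂ] G)))

/-- `κ(x) = x ⊗ 1 ⊗ 1` at legs 34 (with reassociation). -/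
def kap (G M : Type*) [Ring G] [Algebra ℂ G] [Ring M] [Algebra ℂ M] :
    M ⊗[ℂ] G →ₐ[ℂ] M ⊗[ℂ] (G ⊗[ℂ] (G ⊗[ℂ] G)) :=
  (Algebra.TensorProduct.assoc ℂ ℂ ℂ M G (G ⊗[ℂ] G)).toAlgHom.comp
    Algebra.TensorProduct.includeLeft

/-- leg-4 embedding `g ↦ 1 ⊗ 1 ⊗ 1 ⊗ g`. -/
def l4 (G M : Type*) [Ring G] [Algebra ℂ G] [Ring M] [Algebra ℂ M] :
    G →ₐ[ℂ] M ⊗[ℂ] (G ⊗[ℂ] (G ⊗[ℂ] G)) :=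
  (Algebra.TensorProduct.includeRight (R := ℂ) (A := M)).comp
    ((Algebra.TensorProduct.includeRight (R := ℂ) (A := G)).comp
      (Algebra.TensorProduct.includeRight (R := ℂ) (A := G)))

/-- `id ⊗ ε : M ⊗ G → M`. -/
def e0 (M : Type*) [Ring M] [Algebra ℂ M] (Q : QuasiBialg G) :
    M ⊗[ℂ] G →ₐ[ℂ] M :=
  (Algebra.TensorProduct.rid ℂ ℂ M).toAlgHom.comp
    (Algebra.TensorProduct.map (AlgHom.id ℂ M) Q.counit)

/-- `id ⊗ ε ⊗ id : M ⊗ G ⊗ G → M ⊗ G`. -/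
def e2 (M : Type*) [Ring M] [Algebra ℂ M] (Q : QuasiBialg G) :
    M ⊗[ℂ] (G ⊗[ℂ] G) →ₐ[ℂ] M ⊗[ℂ] G :=
  Algebra.TensorProduct.map (AlgHom.id ℂ M)
    ((Algebra.TensorProduct.lid ℂ G).toAlgHom.comp
      (Algebra.TensorProduct.map Q.counit (AlgHom.id ℂ G)))

/-- `id ⊗ id ⊗ ε : M ⊗ G ⊗ G → M ⊗ G`. -/
def e3 (M : Type*) [Ring M] [Algebra ℂ M] (Q : QuasiBialg G) :
    M ⊗[ℂ] (G ⊗[ℂ] G) →ₐ[ℂ] M ⊗[ℂ] G :=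
  Algebra.TensorProduct.map (AlgHom.id ℂ M)
    ((Algebra.TensorProduct.rid ℂ ℂ G).toAlgHom.comp
      (Algebra.TensorProduct.map (AlgHom.id ℂ G) Q.counit))

variable (Q : QuasiBialg G) (R : RightQCoaction G M Q)

-- basic tmul computation lemmas
@[simp] lemma Th_tmul (m : M) (a : G) : Th Q (m ⊗ₜ[ℂ] a) = m ⊗ₜ[ℂ] Q.comul a := by
  simp [Th]

@[simp] lemma Ah_tmul (m : M) (a : G) :
    Ah R (m ⊗ₜ[ℂ] a) = (Algebra.TensorProduct.assoc ℂ ℂ ℂ M G G) (R.rho m ⊗ₜ[ℂ] a) := by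
  simp [Ah]

@[simp] lemma ih_apply (x : M ⊗[ℂ] G) :
    ih G M x = (Algebra.TensorProduct.assoc ℂ ℂ ℂ M G G) (x ⊗ₜ[ℂ] (1 : G)) := by
  simp [ih]

@[simp] lemma D2_tmul (m : M) (w : G ⊗[ℂ] G) :
    D2 M Q (m ⊗ₜ[ℂ] w) =
      m ⊗ₜ[ℂ]
        (Algebra.TensorProduct.assoc ℂ ℂ ℂ G G G)
          (Algebra.TensorProduct.map Q.comul (AlgHom.id ℂ G) w) := by
  simp [D2]

@[simp] lemma D3_tmul (m : M) (w : G ⊗[ℂ] G) :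
    D3 M Q (m ⊗ₜ[ℂ] w) =
      m ⊗ₜ[ℂ] Algebra.TensorProduct.map (AlgHom.id ℂ G) Q.comul w := by
  simp [D3]

@[simp] lemma Jh_tmul (m : M) (b a : G) :
    Jh G M (m ⊗ₜ[ℂ] (b ⊗ₜ[ℂ] a)) = m ⊗ₜ[ℂ] (b ⊗ₜ[ℂ] (a ⊗ₜ[ℂ] (1 : G))) := by
  simp [Jh]

@[simp] lemma Arh_tmul (m : M) (w : G ⊗[ℂ] G) :
    Arh R (m ⊗ₜ[ℂ] w) =
      (Algebra.TensorProduct.assoc ℂ ℂ ℂ M G (G ⊗[ℂ] G)) (R.rho m ⊗ₜ[ℂ] w) := by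
  simp [Arh]

@[simp] lemma kap_apply (x : M ⊗[ℂ] G) :
    kap G M x =
      (Algebra.TensorProduct.assoc ℂ ℂ ℂ M G (G ⊗[ℂ] G)) (x ⊗ₜ[ℂ] (1 : G ⊗[ℂ] G)) := by
  simp [kap]

@[simp] lemma l4_apply (g : G) :
    l4 G M g = (1 : M) ⊗ₜ[ℂ] ((1 : G) ⊗ₜ[ℂ] ((1 : G) ⊗ₜ[ℂ] g)) := by
  simp [l4]

@[simp] lemma e0_tmul (m : M) (a : G) : e0 M Q (m ⊗ₜ[ℂ] a) = Q.counit a • m := by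
  simp [e0]

@[simp] lemma e2_tmul (m : M) (w : G ⊗[ℂ] G) :
    e2 M Q (m ⊗ₜ[ℂ] w) =
      m ⊗ₜ[ℂ]
        (Algebra.TensorProduct.lid ℂ G)
          (Algebra.TensorProduct.map Q.counit (AlgHom.id ℂ G) w) := by
  simp [e2]

@[simp] lemma e3_tmul (m : M) (w : G ⊗[ℂ] G) :
    e3 M Q (m ⊗ₜ[ℂ] w) =
      m ⊗ₜ[ℂ]
        (Algebra.TensorProduct.rid ℂ ℂ G)
          (Algebra.TensorProduct.map (AlgHom.id ℂ G) Q.counit w) := by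
  simp [e3]

-- agreement between algebra-level and linear-level maps
lemma AGassoc {A B C : Type*} [Ring A] [Algebra ℂ A] [Ring B] [Algebra ℂ B]
    [Ring C] [Algebra ℂ C] (x : (A ⊗[ℂ] B) ⊗[ℂ] C) :
    (TensorProduct.assoc ℂ A B C) x = (Algebra.TensorProduct.assoc ℂ ℂ ℂ A B C) x := rfl

lemma AGmap {A B C D : Type*} [Ring A] [Algebra ℂ A] [Ring B] [Algebra ℂ B]
    [Ring C] [Algebra ℂ C] [Ring D] [Algebra ℂ D]
    (f : A →ₐ[ℂ] B) (g : C →ₐ[ℂ] D) (x : A ⊗[ℂ] C) :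
    TensorProduct.map f.toLinearMap g.toLinearMap x = Algebra.TensorProduct.map f g x := rfl

-- core structure lemmas (pure reassociation facts)
lemma C1 (z : M ⊗[ℂ] G) (a g : G) :
    (Algebra.TensorProduct.assoc ℂ ℂ ℂ M G (G ⊗[ℂ] G)) (z ⊗ₜ[ℂ] (a ⊗ₜ[ℂ] g)) =
      Jh G M ((Algebra.TensorProduct.assoc ℂ ℂ ℂ M G G) (z ⊗ₜ[ℂ] a)) * l4 G M g := by
  induction z using TensorProduct.induction_on with
  | zero => simp only [TensorProduct.zero_tmul, map_zero, zero_mul4]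
  | tmul m b => simp [Algebra.TensorProduct.tmul_mul_tmul]
  | add x y hx hy =>
      simp only [TensorProduct.add_tmul, map_add, add_mul, zero_mul4, mul_zero4, add_mul4, mul_add4, hx, hy]

lemma C2 (m : M) (w : G ⊗[ℂ] G) (g : G) :
    m ⊗ₜ[ℂ] ((Algebra.TensorProduct.assoc ℂ ℂ ℂ G G G) (w ⊗ₜ[ℂ] g)) =
      Jh G M (m ⊗ₜ[ℂ] w) * l4 G M g := by
  induction w using TensorProduct.induction_on with
  | zero => simp only [TensorProduct.zero_tmul, TensorProduct.tmul_zero, map_zero, zero_mul4]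
  | tmul b a => simp [Algebra.TensorProduct.tmul_mul_tmul]
  | add x y hx hy =>
      simp only [TensorProduct.add_tmul, TensorProduct.tmul_add, map_add, add_mul, zero_mul4, mul_zero4, add_mul4, mul_add4, hx, hy]

lemma C3 (z : M ⊗[ℂ] G) (a : G) :
    D3 M Q ((Algebra.TensorProduct.assoc ℂ ℂ ℂ M G G) (z ⊗ₜ[ℂ] a)) =
      (Algebra.TensorProduct.assoc ℂ ℂ ℂ M G (G ⊗[ℂ] G)) (z ⊗ₜ[ℂ] Q.comul a) := by
  induction z using TensorProduct.induction_on with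
  | zero => simp only [TensorProduct.zero_tmul, map_zero, zero_mul4, zero_mul2]
  | tmul m b => simp
  | add x y hx hy =>
      simp only [TensorProduct.add_tmul, map_add, zero_mul4, mul_zero4, add_mul4, mul_add4, hx, hy]

lemma C4 (z : M ⊗[ℂ] G) (a : G) :
    D2 M Q ((Algebra.TensorProduct.assoc ℂ ℂ ℂ M G G) (z ⊗ₜ[ℂ] a)) =
      Jh G M (Th Q z) * l4 G M a := by
  induction z using TensorProduct.induction_on with
  | zero => simp only [TensorProduct.zero_tmul, map_zero, zero_mul4, zero_mul2]
  | tmul m b =>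
      simp only [Algebra.TensorProduct.assoc_tmul, D2_tmul, Algebra.TensorProduct.map_tmul,
        AlgHom.coe_id, id_eq, Th_tmul]
      exact C2 m (Q.comul b) a
  | add x y hx hy =>
      simp only [TensorProduct.add_tmul, map_add, add_mul, zero_mul4, mul_zero4, add_mul4, mul_add4, hx, hy]

lemma C5 (z : M ⊗[ℂ] G) (a : G) :
    Arh R ((Algebra.TensorProduct.assoc ℂ ℂ ℂ M G G) (z ⊗ₜ[ℂ] a)) =
      Jh G M (Ah R z) * l4 G M a := by
  induction z using TensorProduct.induction_on with
  | zero => simp only [TensorProduct.zero_tmul, map_zero, zero_mul4, zero_mul2]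
  | tmul m b =>
      simp only [Algebra.TensorProduct.assoc_tmul, Arh_tmul, Ah_tmul]
      exact C1 (R.rho m) b a
  | add x y hx hy =>
      simp only [TensorProduct.add_tmul, map_add, add_mul, zero_mul4, mul_zero4, add_mul4, mul_add4, hx, hy]

lemma C6 (z : M ⊗[ℂ] G) (a : G) :
    e2 M Q ((Algebra.TensorProduct.assoc ℂ ℂ ℂ M G G) (z ⊗ₜ[ℂ] a)) =
      e0 M Q z ⊗ₜ[ℂ] a := by
  induction z using TensorProduct.induction_on with
  | zero => simp only [TensorProduct.zero_tmul, map_zero, zero_mul4, zero_mul2]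
  | tmul m b =>
      simp [TensorProduct.tmul_smul, TensorProduct.smul_tmul']
  | add x y hx hy =>
      simp only [TensorProduct.add_tmul, map_add, zero_mul4, mul_zero4, add_mul4, mul_add4, hx, hy]

lemma C7 (z : M ⊗[ℂ] G) (a : G) :
    e3 M Q ((Algebra.TensorProduct.assoc ℂ ℂ ℂ M G G) (z ⊗ₜ[ℂ] a)) =
      Q.counit a • z := by
  induction z using TensorProduct.induction_on with
  | zero => simp only [TensorProduct.zero_tmul, map_zero, smul_zero2]
  | tmul m b => simp [TensorProduct.tmul_smul]
  | add x y hx hy =>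
      simp only [TensorProduct.add_tmul, map_add, smul_add2, zero_mul4, mul_zero4, add_mul4, mul_add4, hx, hy]

lemma C8 (y : M ⊗[ℂ] (G ⊗[ℂ] G)) (g : G) :
    Jh G M y * l4 G M g = l4 G M g * Jh G M y := by
  induction y using TensorProduct.induction_on with
  | zero => rw [map_zero, zero_mul4, mul_zero4]
  | tmul m w =>
      induction w using TensorProduct.induction_on with
      | zero => rw [TensorProduct.tmul_zero, map_zero, zero_mul4, mul_zero4]
      | tmul b a => simp [Algebra.TensorProduct.tmul_mul_tmul]
      | add x y hx hy =>
          simp only [TensorProduct.tmul_add, map_add, add_mul4, mul_add4, hx, hy]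
  | add x y hx hy =>
      simp only [map_add, add_mul4, mul_add4, hx, hy]

-- composite identities between the algebra maps
lemma H1 (x : M ⊗[ℂ] G) : Jh G M (ih G M x) = kap G M x := by
  induction x using TensorProduct.induction_on with
  | zero => simp only [map_zero]
  | tmul m a => simp [Algebra.TensorProduct.one_def]
  | add x y hx hy => simp only [map_add, hx, hy]

lemma H2 (x : M ⊗[ℂ] G) : D3 M Q (ih G M x) = kap G M x := by
  induction x using TensorProduct.induction_on with
  | zero => simp only [map_zero]
  | tmul m a => simp [Algebra.TensorProduct.one_def]
  | add x y hx hy => simp only [map_add, hx, hy]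

lemma H3 (x : M ⊗[ℂ] G) : Arh R (ih G M x) = Jh G M (Ah R x) := by
  induction x using TensorProduct.induction_on with
  | zero => simp only [map_zero]
  | tmul m a =>
      rw [ih_apply, C5 Q R (m ⊗ₜ[ℂ] a) 1, alg_one4, mul_one4]
  | add x y hx hy => simp only [map_add, hx, hy]

lemma H4 (x : M ⊗[ℂ] G) : D3 M Q (Ah R x) = Arh R (Th Q x) := by
  induction x using TensorProduct.induction_on with
  | zero => simp only [map_zero]
  | tmul m a =>
      simp only [Ah_tmul, Th_tmul]
      rw [C3 Q (R.rho m) a]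
      simp
  | add x y hx hy => simp only [map_add, hx, hy]

lemma H5 (x : M ⊗[ℂ] G) : D2 M Q (ih G M x) = Jh G M (Th Q x) := by
  induction x using TensorProduct.induction_on with
  | zero => simp only [map_zero]
  | tmul m a =>
      rw [ih_apply, C4 Q (m ⊗ₜ[ℂ] a) 1, alg_one4, mul_one4]
  | add x y hx hy => simp only [map_add, hx, hy]

end Aux

end Statement14Aux

namespace Statement14Aux
section B
set_option maxHeartbeats 1600000
set_option synthInstance.maxHeartbeats 1000000
set_option maxRecDepth 8000

variable {G M : Type*} [Ring G] [Algebra ℂ G] [Ring M] [Algebra ℂ M]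
variable (Q : QuasiBialg G) (R : RightQCoaction G M Q)

-- agreement lemmas with the linear-map formulations used in the statement
lemma AG_T (x : M ⊗[ℂ] G) :
    TensorProduct.map LinearMap.id Q.comul.toLinearMap x = Th Q x := rfl

lemma AG_A (x : M ⊗[ℂ] G) :
    (TensorProduct.assoc ℂ M G G)
      (TensorProduct.map R.rho.toLinearMap LinearMap.id x) = Ah R x := rfl

lemma AG_i (x : M ⊗[ℂ] G) :
    (TensorProduct.assoc ℂ M G G) (x ⊗ₜ[ℂ] (1 : G)) = ih G M x := rfl

lemma AG_D2 (x : M ⊗[ℂ] (G ⊗[ℂ] G)) :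
    TensorProduct.map LinearMap.id (TensorProduct.assoc ℂ G G G).toLinearMap
      (TensorProduct.map LinearMap.id
        (TensorProduct.map Q.comul.toLinearMap LinearMap.id) x) = D2 M Q x := by
  induction x using TensorProduct.induction_on with
  | zero => simp only [map_zero]
  | tmul m w => rfl
  | add a b ha hb => simp only [map_add, ha, hb]

lemma AG_D3 (x : M ⊗[ℂ] (G ⊗[ℂ] G)) :
    TensorProduct.map LinearMap.id
      (TensorProduct.map LinearMap.id Q.comul.toLinearMap) x = D3 M Q x := rfl

lemma AG_J (x : M ⊗[ℂ] (G ⊗[ℂ] G)) :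
    TensorProduct.map LinearMap.id (TensorProduct.assoc ℂ G G G).toLinearMap
      ((TensorProduct.assoc ℂ M (G ⊗[ℂ] G) G) (x ⊗ₜ[ℂ] (1 : G))) = Jh G M x := rfl

lemma AG_Ar (x : M ⊗[ℂ] (G ⊗[ℂ] G)) :
    (TensorProduct.assoc ℂ M G (G ⊗[ℂ] G))
      (TensorProduct.map R.rho.toLinearMap LinearMap.id x) = Arh R x := rfl

lemma AG_rid {A : Type*} [Ring A] [Algebra ℂ A] (y : A ⊗[ℂ] ℂ) :
    (Algebra.TensorProduct.rid ℂ ℂ A) y = (TensorProduct.rid ℂ A) y := by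
  induction y using TensorProduct.induction_on with
  | zero => simp only [map_zero]
  | tmul a c => simp
  | add a b ha hb => simp only [map_add, ha, hb]

lemma AG_e0 (x : M ⊗[ℂ] G) :
    (TensorProduct.rid ℂ M)
      (TensorProduct.map LinearMap.id Q.counit.toLinearMap x) = e0 M Q x := by
  induction x using TensorProduct.induction_on with
  | zero => simp only [map_zero]
  | tmul m a => simp
  | add a b ha hb => simp only [map_add, ha, hb]

lemma AG_e2 (x : M ⊗[ℂ] (G ⊗[ℂ] G)) :
    TensorProduct.map LinearMap.id
      ((TensorProduct.lid ℂ G).toLinearMap ∘ₗ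
        TensorProduct.map Q.counit.toLinearMap LinearMap.id) x = e2 M Q x := by
  induction x using TensorProduct.induction_on with
  | zero => simp only [map_zero]
  | tmul m w => rfl
  | add a b ha hb => simp only [map_add, ha, hb]

lemma AG_e3 (x : M ⊗[ℂ] (G ⊗[ℂ] G)) :
    TensorProduct.map LinearMap.id
      ((TensorProduct.rid ℂ G).toLinearMap ∘ₗ
        TensorProduct.map LinearMap.id Q.counit.toLinearMap) x = e3 M Q x := by
  induction x using TensorProduct.induction_on with
  | zero => simp only [map_zero]
  | tmul m w =>
      induction w using TensorProduct.induction_on with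
      | zero => simp only [TensorProduct.tmul_zero, map_zero]
      | tmul b a => simp [AG_rid]
      | add a b ha hb =>
          simp only [TensorProduct.tmul_add, map_add, ha, hb]
  | add a b ha hb => simp only [map_add, ha, hb]

-- the coaction axioms in algebra-map form
lemma INT (m : M) :
    R.phiR * Ah R (R.rho m) = Th Q (R.rho m) * R.phiR := by
  exact R.intertwine m

lemma PEN :
    (1 : M) ⊗ₜ[ℂ] Q.assocEl * D2 M Q R.phiR * Jh G M R.phiR =
      D3 M Q R.phiR * Arh R R.phiR := by
  have h := R.pentagon
  rw [AG_D2 Q R.phiR, AG_J R.phiR, AG_D3 Q R.phiR, AG_Ar Q R R.phiR] at h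
  exact h

lemma QC (x : M ⊗[ℂ] G) :
    D3 M Q (Th Q x) * ((1 : M) ⊗ₜ[ℂ] Q.assocEl) =
      ((1 : M) ⊗ₜ[ℂ] Q.assocEl) * D2 M Q (Th Q x) := by
  induction x using TensorProduct.induction_on with
  | zero => simp only [map_zero, zero_mul4, mul_zero4]
  | tmul m a =>
      simp only [Th_tmul, D3_tmul, D2_tmul, Algebra.TensorProduct.tmul_mul_tmul,
        mul_one, one_mul]
      exact congrArg (fun w => m ⊗ₜ[ℂ] w) (Q.quasiCoassoc a)
  | add a b ha hb => simp only [map_add, add_mul4, mul_add4, ha, hb]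

lemma EX (x : M ⊗[ℂ] G) :
    Jh G M R.phiR * Arh R (Ah R x) = D2 M Q (Ah R x) * Jh G M R.phiR := by
  induction x using TensorProduct.induction_on with
  | zero => simp only [map_zero, zero_mul4, mul_zero4]
  | tmul m a =>
      rw [Ah_tmul, C5 Q R (R.rho m) a, C4 Q (R.rho m) a, ← mul_assoc4, ← map_mul,
        INT Q R m, map_mul, mul_assoc4, C8 R.phiR a, ← mul_assoc4]
  | add a b ha hb => simp only [map_add, add_mul4, mul_add4, ha, hb]

-- counit lemmas
lemma CT2 (x : M ⊗[ℂ] G) : e2 M Q (Th Q x) = x := by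
  induction x using TensorProduct.induction_on with
  | zero => simp only [map_zero]
  | tmul m a =>
      simp only [Th_tmul, e2_tmul]
      have h := Q.counit_comul_left a
      exact congrArg (fun w => m ⊗ₜ[ℂ] w) h
  | add a b ha hb => simp only [map_add, ha, hb]

lemma CT3 (x : M ⊗[ℂ] G) : e3 M Q (Th Q x) = x := by
  induction x using TensorProduct.induction_on with
  | zero => simp only [map_zero]
  | tmul m a =>
      simp only [Th_tmul, e3_tmul]
      have h := Q.counit_comul_right a
      rw [← AG_rid] at h
      exact congrArg (fun w => m ⊗ₜ[ℂ] w) h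
  | add a b ha hb => simp only [map_add, ha, hb]

lemma CR0 (m : M) : e0 M Q (R.rho m) = m := by
  have h := R.counit_rho m
  rw [AG_e0 Q (R.rho m)] at h
  exact h

lemma CA2 (x : M ⊗[ℂ] G) : e2 M Q (Ah R x) = x := by
  induction x using TensorProduct.induction_on with
  | zero => simp only [map_zero]
  | tmul m a => rw [Ah_tmul, C6 Q (R.rho m) a, CR0 Q R m]
  | add a b ha hb => simp only [map_add, ha, hb]

lemma CA3 (x : M ⊗[ℂ] G) : e3 M Q (Ah R x) = R.rho (e0 M Q x) := by
  induction x using TensorProduct.induction_on with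
  | zero => simp only [map_zero]
  | tmul m a => rw [Ah_tmul, C7 Q (R.rho m) a, e0_tmul, map_smul]
  | add a b ha hb => simp only [map_add, ha, hb]

lemma Ci2 (x : M ⊗[ℂ] G) : e2 M Q (ih G M x) = e0 M Q x ⊗ₜ[ℂ] (1 : G) := by
  rw [ih_apply, C6 Q x 1]

lemma Ci3 (x : M ⊗[ℂ] G) : e3 M Q (ih G M x) = x := by
  rw [ih_apply, C7 Q x 1, map_one, one_smul]

lemma Cphi2 : e2 M Q R.phiR = 1 := by
  have h := R.counit_phiR_mid
  rw [AG_e2 Q R.phiR] at h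
  exact h

lemma Cphi3 : e3 M Q R.phiR = 1 := by
  have h := R.counit_phiR_right
  rw [AG_e3 Q R.phiR] at h
  exact h

end B
end Statement14Aux

namespace Statement14Aux
section C
set_option maxHeartbeats 1600000
set_option synthInstance.maxHeartbeats 1000000
set_option maxRecDepth 8000

variable {G M : Type*} [Ring G] [Algebra ℂ G] [Ring M] [Algebra ℂ M]
variable (Q : QuasiBialg G) (R : RightQCoaction G M Q) (U Uinv : M ⊗[ℂ] G)

lemma one_mulGG (w : G ⊗[ℂ] G) : (1 : G ⊗[ℂ] G) * w = w := one_mul w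
lemma mul_oneGG (w : G ⊗[ℂ] G) : w * (1 : G ⊗[ℂ] G) = w := mul_one w

lemma tw_apply (m : M) :
    twistRho U Uinv R.rho.toLinearMap m = U * R.rho m * Uinv := rfl

lemma AX (y : M ⊗[ℂ] G) :
    (TensorProduct.assoc ℂ M G G)
      (TensorProduct.map (twistRho U Uinv R.rho.toLinearMap) LinearMap.id y) =
      ih G M U * Ah R y * ih G M Uinv := by
  induction y using TensorProduct.induction_on with
  | zero => simp only [map_zero, mul_zero3, zero_mul3]
  | tmul m g =>
      simp only [TensorProduct.map_tmul, LinearMap.id_coe, id_eq, tw_apply]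
      rw [AGassoc, ih_apply, ih_apply, Ah_tmul, ← map_mul, ← map_mul]
      congr 1
      rw [Algebra.TensorProduct.tmul_mul_tmul, Algebra.TensorProduct.tmul_mul_tmul,
        one_mul, mul_one]
  | add a b ha hb => simp only [map_add, mul_add3, add_mul3, ha, hb]

lemma AX4 (y : M ⊗[ℂ] (G ⊗[ℂ] G)) :
    (TensorProduct.assoc ℂ M G (G ⊗[ℂ] G))
      (TensorProduct.map (twistRho U Uinv R.rho.toLinearMap) LinearMap.id y) =
      kap G M U * Arh R y * kap G M Uinv := by
  induction y using TensorProduct.induction_on with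
  | zero => simp only [map_zero, mul_zero4, zero_mul4]
  | tmul m w =>
      simp only [TensorProduct.map_tmul, LinearMap.id_coe, id_eq, tw_apply]
      rw [AGassoc, kap_apply, kap_apply, Arh_tmul, ← map_mul, ← map_mul]
      congr 1
      rw [Algebra.TensorProduct.tmul_mul_tmul, Algebra.TensorProduct.tmul_mul_tmul,
        one_mulGG, mul_oneGG]
  | add a b ha hb => simp only [map_add, mul_add4, add_mul4, ha, hb]

lemma phi'_eq :
    twistPhiR Q R U Uinv = Th Q U * R.phiR * Ah R Uinv * ih G M Uinv := rfl

end C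
end Statement14Aux

open Statement14Aux
set_option maxHeartbeats 1600000
set_option synthInstance.maxHeartbeats 1000000
set_option maxRecDepth 8000
/-- Let `(G, Δ, ε, φ)` be a quasi-bialgebra and `(ρ, φ_ρ)` a right coaction
of `G` on `M`.  If `U ∈ M ⊗ G` is invertible with `(id ⊗ ε)(U) = 1`, then
`ρ'(m) := U·ρ(m)·U⁻¹` is again a right `G`-coaction with reassociator
`φ'_ρ = (id ⊗ Δ)(U)·φ_ρ·(ρ ⊗ id)(U⁻¹)·(U⁻¹ ⊗ 1)`; i.e. `(ρ', φ'_ρ)` satisfies all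
right-coaction axioms. -/
theorem statement14
    (G M : Type*) [Ring G] [Algebra ℂ G] [Ring M] [Algebra ℂ M]
    (Q : QuasiBialg G) (R : RightQCoaction G M Q)
    (U Uinv : M ⊗[ℂ] G)
    (hU_mul_inv : U * Uinv = 1) (hU_inv_mul : Uinv * U = 1)
    (hU_counit : (TensorProduct.rid ℂ M)
      (TensorProduct.map LinearMap.id Q.counit.toLinearMap U) = 1) :
    -- `ρ'` is a unital algebra map
    (∀ m n : M,
      twistRho U Uinv R.rho.toLinearMap (m * n) =
        twistRho U Uinv R.rho.toLinearMap m * twistRho U Uinv R.rho.toLinearMap n) ∧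
    twistRho U Uinv R.rho.toLinearMap 1 = 1 ∧
    -- `φ'_ρ` is invertible
    IsUnit (twistPhiR Q R U Uinv) ∧
    -- the intertwining relation for `(ρ', φ'_ρ)`
    (∀ m : M,
      twistPhiR Q R U Uinv *
          (TensorProduct.assoc ℂ M G G)
            (TensorProduct.map (twistRho U Uinv R.rho.toLinearMap) LinearMap.id
              (twistRho U Uinv R.rho.toLinearMap m)) =
        TensorProduct.map LinearMap.id Q.comul.toLinearMap
            (twistRho U Uinv R.rho.toLinearMap m) * twistPhiR Q R U Uinv) ∧
    -- the mixed pentagon identity for `(ρ', φ'_ρ)`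
    ((1 : M) ⊗ₜ[ℂ] Q.assocEl *
        TensorProduct.map LinearMap.id (TensorProduct.assoc ℂ G G G).toLinearMap
          (TensorProduct.map LinearMap.id
            (TensorProduct.map Q.comul.toLinearMap LinearMap.id) (twistPhiR Q R U Uinv)) *
        TensorProduct.map LinearMap.id (TensorProduct.assoc ℂ G G G).toLinearMap
          ((TensorProduct.assoc ℂ M (G ⊗[ℂ] G) G)
            ((twistPhiR Q R U Uinv) ⊗ₜ[ℂ] (1 : G))) =
      TensorProduct.map LinearMap.id
          (TensorProduct.map LinearMap.id Q.comul.toLinearMap) (twistPhiR Q R U Uinv) *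
        (TensorProduct.assoc ℂ M G (G ⊗[ℂ] G))
          (TensorProduct.map (twistRho U Uinv R.rho.toLinearMap) LinearMap.id
            (twistPhiR Q R U Uinv))) ∧
    -- the counit axioms for `(ρ', φ'_ρ)`
    (∀ m : M,
      (TensorProduct.rid ℂ M)
        (TensorProduct.map LinearMap.id Q.counit.toLinearMap
          (twistRho U Uinv R.rho.toLinearMap m)) = m) ∧
    TensorProduct.map LinearMap.id
        ((TensorProduct.lid ℂ G).toLinearMap ∘ₗ
          TensorProduct.map Q.counit.toLinearMap LinearMap.id) (twistPhiR Q R U Uinv) =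
      (1 : M ⊗[ℂ] G) ∧
    TensorProduct.map LinearMap.id
        ((TensorProduct.rid ℂ G).toLinearMap ∘ₗ
          TensorProduct.map LinearMap.id Q.counit.toLinearMap) (twistPhiR Q R U Uinv) =
      (1 : M ⊗[ℂ] G) := by

  have hThVU : Th Q Uinv * Th Q U = 1 := by rw [← map_mul, hU_inv_mul, map_one]
  have hAhVU : Ah R Uinv * Ah R U = 1 := by rw [← map_mul, hU_inv_mul, map_one]
  have hAhUV : Ah R U * Ah R Uinv = 1 := by rw [← map_mul, hU_mul_inv, map_one]
  have hihVU : ih G M Uinv * ih G M U = 1 := by rw [← map_mul, hU_inv_mul, map_one]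
  have hihUV : ih G M U * ih G M Uinv = 1 := by rw [← map_mul, hU_mul_inv, map_one]
  have hThUV : Th Q U * Th Q Uinv = 1 := by rw [← map_mul, hU_mul_inv, map_one]
  have hkapVU : kap G M Uinv * kap G M U = 1 := by rw [← map_mul, hU_inv_mul, alg_one4]
  have hJhThVU : Jh G M (Th Q Uinv) * Jh G M (Th Q U) = 1 := by
    rw [← map_mul, hThVU, alg_one4]
  have hArhThVU : Arh R (Th Q Uinv) * Arh R (Th Q U) = 1 := by
    rw [← map_mul, hThVU, alg_one4]
  have he0U : e0 M Q U = 1 := by rw [← AG_e0]; exact hU_counit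
  have he0V : e0 M Q Uinv = 1 := by
    have h : e0 M Q Uinv * e0 M Q U = 1 := by rw [← map_mul, hU_inv_mul, map_one]
    rwa [he0U, mul_one] at h
  refine ⟨?_, ?_, ?_, ?_, ?_, ?_, ?_, ?_⟩
  · -- multiplicativity
    intro m n
    simp only [tw_apply, map_mul, mul_assoc2]
    rw [cancel2 hU_inv_mul]
  · -- unitality
    rw [tw_apply, map_one, mul_one2 U, hU_mul_inv]
  · -- invertibility of the twisted reassociator
    refine ⟨⟨twistPhiR Q R U Uinv,
      ih G M U * Ah R U * R.phiRInv * Th Q Uinv, ?_, ?_⟩, rfl⟩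
    · rw [phi'_eq]
      simp only [mul_assoc3]
      rw [cancel3 hihVU, cancel3 hAhVU, cancel3 R.phiR_mul_inv, hThUV]
    · rw [phi'_eq]
      simp only [mul_assoc3]
      rw [cancel3 hThVU, cancel3 R.phiR_inv_mul, cancel3 hAhUV, hihUV]
  · -- intertwining
    intro m
    have intc : ∀ c, R.phiR * (Ah R (R.rho m) * c) = Th Q (R.rho m) * (R.phiR * c) :=
      fun c => by rw [← mul_assoc3, INT Q R m, mul_assoc3]
    rw [AX Q R U Uinv, AG_T Q, phi'_eq]
    simp only [tw_apply, map_mul, mul_assoc3]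
    rw [cancel3 hihVU, cancel3 hAhVU, intc, cancel3 hThVU]
  · -- pentagon
    have exc : ∀ c, D2 M Q (Ah R Uinv) * (Jh G M R.phiR * c) =
        Jh G M R.phiR * (Arh R (Ah R Uinv) * c) :=
      fun c => by rw [← mul_assoc4, ← EX Q R Uinv, mul_assoc4]
    have qcc : ∀ c, (1 : M) ⊗ₜ[ℂ] Q.assocEl * (D2 M Q (Th Q U) * c) =
        D3 M Q (Th Q U) * ((1 : M) ⊗ₜ[ℂ] Q.assocEl * c) :=
      fun c => by rw [← mul_assoc4, ← QC Q U, mul_assoc4]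
    have penc : ∀ c, (1 : M) ⊗ₜ[ℂ] Q.assocEl * (D2 M Q R.phiR * (Jh G M R.phiR * c)) =
        D3 M Q R.phiR * (Arh R R.phiR * c) :=
      fun c => by rw [← mul_assoc4, ← mul_assoc4, PEN Q R, mul_assoc4]
    rw [AG_D2 Q, AG_J, AG_D3 Q, AX4 Q R U Uinv, phi'_eq]
    simp only [map_mul]
    rw [H5 Q Uinv, H1 Uinv, H2 Q Uinv, H4 Q R Uinv, H3 Q R Uinv]
    simp only [mul_assoc4]
    rw [cancel4 hJhThVU, exc, qcc, penc, cancel4 hkapVU, cancel4 hArhThVU]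
  · -- counit of the twisted coaction
    intro m
    rw [AG_e0 Q, tw_apply, map_mul, map_mul, he0U, CR0 Q R m, he0V, one_mul, mul_one]
  · -- counit of the twisted reassociator (middle leg)
    rw [AG_e2 Q, phi'_eq]
    simp only [map_mul]
    rw [CT2 Q U, Cphi2 Q R, CA2 Q R Uinv, Ci2 Q Uinv, he0V,
      ← Algebra.TensorProduct.one_def]
    simp only [mul_one2]
    exact hU_mul_inv
  · -- counit of the twisted reassociator (right leg)
    rw [AG_e3 Q, phi'_eq]
    simp only [map_mul]
    rw [CT3 Q U, Cphi3 Q R, CA3 Q R Uinv, Ci3 Q Uinv, he0V, map_one]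
    simp only [mul_one2]
    exact hU_mul_inv
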